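/- Let ĥ : ℝ → ℝ be a C¹ function supported in [−1,1] with |ĥ| ≤ M₀ and |ĥ'| ≤ M₁. Then for all L ≥ 1 and τ ≥ 1, |∫₀^∞ ĥ(y)·sinh(L·y/2)·cos(τ·L·y) dy| ≤ C·(M₀ + M₁)·e^{L/2}/τ, for an absolute constant C. -/

import Mathlib

open MeasureTheory

theorem stmt_8 :
    ∃ C : ℝ, 0 < C ∧
      ∀ (hhat : ℝ → ℝ) (M₀ M₁ : ℝ), ContDiff ℝ 1 hhat →
        Function.support hhat ⊆ Set.Icc (-1 : ℝ) 1 →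
        (∀ y, |hhat y| ≤ M₀) → (∀ y, |deriv hhat y| ≤ M₁) →
        ∀ L τ : ℝ, 1 ≤ L → 1 ≤ τ →
          |∫ y in Set.Ioi (0 : ℝ), hhat y * Real.sinh (L * y / 2) * Real.cos (τ * L * y)| ≤
            C * (M₀ + M₁) * Real.exp (L / 2) / τ := by
  refine ⟨1, one_pos, ?_⟩
  intro hhat M₀ M₁ hC1 hsupp hM0b hM1b L τ hL hτ
  have hLpos : (0:ℝ) < L := lt_of_lt_of_le one_pos hL
  have hτpos : (0:ℝ) < τ := lt_of_lt_of_le one_pos hτ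
  have hτL : (0:ℝ) < τ * L := mul_pos hτpos hLpos
  have hM0 : 0 ≤ M₀ := le_trans (abs_nonneg _) (hM0b 0)
  have hM1 : 0 ≤ M₁ := le_trans (abs_nonneg _) (hM1b 0)
  have hEpos : (0:ℝ) < Real.exp (L / 2) := Real.exp_pos _
  have hzero : ∀ y : ℝ, 1 < y → hhat y = 0 := by
    intro y hy
    by_contra h
    have := hsupp (Function.mem_support.mpr h)
    exact absurd this.2 (not_le.mpr hy)
  have hcont : Continuous hhat := hC1.continuous
  have hderiv_cont : Continuous (deriv hhat) := hC1.continuous_deriv le_rfl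
  have hdiff : Differentiable ℝ hhat := hC1.differentiable one_ne_zero
  have h1 : hhat 1 = 0 := by
    have ht1 : Filter.Tendsto hhat (nhdsWithin 1 (Set.Ioi 1)) (nhds (hhat 1)) :=
      (hcont.continuousWithinAt).tendsto
    have ht2 : Filter.Tendsto hhat (nhdsWithin 1 (Set.Ioi 1)) (nhds 0) := by
      apply Filter.Tendsto.congr' _ tendsto_const_nhds
      filter_upwards [self_mem_nhdsWithin] with y hy
      exact (hzero y hy).symm
    exact tendsto_nhds_unique ht1 ht2
  -- reduce to interval [0,1]
  set f : ℝ → ℝ := fun y => hhat y * Real.sinh (L * y / 2) * Real.cos (τ * L * y) with hf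
  have hred : ∫ y in Set.Ioi (0:ℝ), f y = ∫ y in Set.Ioc (0:ℝ) 1, f y := by
    apply setIntegral_eq_of_subset_of_forall_diff_eq_zero measurableSet_Ioi
    · exact Set.Ioc_subset_Ioi_self
    · intro y hy
      have hy1 : 1 < y := by
        rcases hy with ⟨hy0, hy1⟩
        by_contra h
        exact hy1 ⟨hy0, not_lt.mp h⟩
      simp [hf, hzero y hy1]
  have hint : ∫ y in Set.Ioc (0:ℝ) 1, f y = ∫ y in (0:ℝ)..1, f y :=
    (intervalIntegral.integral_of_le (by norm_num)).symm
  -- integration by parts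
  set u : ℝ → ℝ := fun y => hhat y * Real.sinh (L * y / 2) with hu
  set u' : ℝ → ℝ := fun y =>
    deriv hhat y * Real.sinh (L * y / 2) + hhat y * (Real.cosh (L * y / 2) * (L / 2)) with hu'
  set v : ℝ → ℝ := fun y => Real.sin (τ * L * y) / (τ * L) with hv
  have hud : ∀ y : ℝ, HasDerivAt u (u' y) y := by
    intro y
    have hder1 : HasDerivAt (fun y : ℝ => L * y / 2) (L / 2) y := by
      simpa using ((hasDerivAt_id y).const_mul L).div_const 2
    have hder2 : HasDerivAt (fun y : ℝ => Real.sinh (L * y / 2))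
        (Real.cosh (L * y / 2) * (L / 2)) y := (Real.hasDerivAt_sinh _).comp y hder1
    exact ((hdiff y).hasDerivAt).mul hder2
  have hvd : ∀ y : ℝ, HasDerivAt v (Real.cos (τ * L * y)) y := by
    intro y
    have hder1 : HasDerivAt (fun y : ℝ => τ * L * y) (τ * L) y := by
      simpa using (hasDerivAt_id y).const_mul (τ * L)
    have hder2 : HasDerivAt (fun y : ℝ => Real.sin (τ * L * y))
        (Real.cos (τ * L * y) * (τ * L)) y := (Real.hasDerivAt_sin _).comp y hder1
    have hder3 := hder2.div_const (τ * L)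
    simpa [mul_div_assoc, mul_div_cancel_right₀ _ (ne_of_gt hτL)] using hder3
  have hu'cont : Continuous u' := by
    rw [hu']; fun_prop
  have hibp : ∫ y in (0:ℝ)..1, u y * Real.cos (τ * L * y)
      = u 1 * v 1 - u 0 * v 0 - ∫ y in (0:ℝ)..1, u' y * v y := by
    apply intervalIntegral.integral_mul_deriv_eq_deriv_mul
    · intro x _; exact hud x
    · intro x _; exact hvd x
    · exact hu'cont.intervalIntegrable 0 1
    · exact (by fun_prop : Continuous (fun y : ℝ => Real.cos (τ * L * y))).intervalIntegrable 0 1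
  have hbdry : u 1 * v 1 - u 0 * v 0 = 0 := by
    simp [hu, hv, h1]
  -- bound the remaining integral
  have hbound : ∀ y ∈ Set.uIoc (0:ℝ) 1, ‖u' y * v y‖ ≤ (M₀ + M₁) * Real.exp (L / 2) / τ := by
    intro y hy
    rw [Set.uIoc_of_le (by norm_num : (0:ℝ) ≤ 1)] at hy
    obtain ⟨hy0, hy1⟩ := hy
    have hty : 0 ≤ L * y / 2 := by positivity
    have hEmono : Real.exp (L * y / 2) ≤ Real.exp (L / 2) :=
      Real.exp_le_exp.mpr (by nlinarith)
    have hexpneg : 0 < Real.exp (-(L * y / 2)) := Real.exp_pos _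
    have hexpneg' : Real.exp (-(L * y / 2)) ≤ Real.exp (L * y / 2) :=
      Real.exp_le_exp.mpr (by linarith)
    have hsinh_le : |Real.sinh (L * y / 2)| ≤ Real.exp (L / 2) / 2 := by
      rw [abs_of_nonneg (Real.sinh_nonneg_iff.mpr hty), Real.sinh_eq]
      nlinarith
    have hcosh_le : |Real.cosh (L * y / 2)| ≤ Real.exp (L / 2) := by
      rw [abs_of_nonneg (Real.cosh_pos _).le, Real.cosh_eq]
      nlinarith
    have hA : |u' y| ≤ M₁ * (Real.exp (L / 2) / 2) + M₀ * (Real.exp (L / 2) * (L / 2)) := by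
      rw [hu']
      calc |deriv hhat y * Real.sinh (L * y / 2) + hhat y * (Real.cosh (L * y / 2) * (L / 2))|
          ≤ |deriv hhat y * Real.sinh (L * y / 2)|
            + |hhat y * (Real.cosh (L * y / 2) * (L / 2))| := abs_add_le _ _
        _ ≤ M₁ * (Real.exp (L / 2) / 2) + M₀ * (Real.exp (L / 2) * (L / 2)) := by
            gcongr
            · rw [abs_mul]
              exact mul_le_mul (hM1b y) hsinh_le (abs_nonneg _) hM1
            · rw [abs_mul, abs_mul, abs_of_nonneg (by positivity : (0:ℝ) ≤ L / 2)]
              exact mul_le_mul (hM0b y)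
                (mul_le_mul_of_nonneg_right hcosh_le (by positivity)) (by positivity) hM0
    have hB : |v y| ≤ 1 / (τ * L) := by
      rw [hv, abs_div, abs_of_pos hτL]
      gcongr
      exact Real.abs_sin_le_one _
    have hnonnegA : 0 ≤ M₁ * (Real.exp (L / 2) / 2) + M₀ * (Real.exp (L / 2) * (L / 2)) := by
      positivity
    calc ‖u' y * v y‖ = |u' y| * |v y| := abs_mul _ _
      _ ≤ (M₁ * (Real.exp (L / 2) / 2) + M₀ * (Real.exp (L / 2) * (L / 2))) * (1 / (τ * L)) :=
          mul_le_mul hA hB (abs_nonneg _) hnonnegA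
      _ ≤ (M₀ + M₁) * Real.exp (L / 2) / τ := by
          rw [mul_one_div, div_le_div_iff₀ hτL hτpos]
          nlinarith [mul_nonneg (mul_nonneg hM1 hEpos.le) hτpos.le,
            mul_nonneg (mul_nonneg hM0 hEpos.le) hτpos.le,
            mul_nonneg (mul_nonneg (mul_nonneg hM1 hEpos.le) hτpos.le) (sub_nonneg.mpr hL),
            mul_nonneg (mul_nonneg (mul_nonneg hM0 hEpos.le) hτpos.le) (sub_nonneg.mpr hL)]
  have hnorm : ‖∫ y in (0:ℝ)..1, u' y * v y‖ ≤ ((M₀ + M₁) * Real.exp (L / 2) / τ) * |1 - 0| :=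
    intervalIntegral.norm_integral_le_of_norm_le_const hbound
  have hfinal : |∫ y in (0:ℝ)..1, u' y * v y| ≤ (M₀ + M₁) * Real.exp (L / 2) / τ := by
    simpa using hnorm
  rw [hred, hint]
  have heq : ∫ y in (0:ℝ)..1, f y = -∫ y in (0:ℝ)..1, u' y * v y := by
    have : ∫ y in (0:ℝ)..1, f y = ∫ y in (0:ℝ)..1, u y * Real.cos (τ * L * y) := rfl
    rw [this, hibp, hbdry, zero_sub]
  rw [heq, abs_neg, one_mul]
  exact hfinal
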